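/- arXiv:1912.08448 — 7 statements merged into one kernel-verified Lean document; each statement's English description precedes it below -/
import Mathlib

section
/- Let A be an abelian group generated by a subset G, let B be an abelian group, f : A → B, and m ∈ ℕ₀. Then fdeg(f) ≤ m if and only if for all g_1, …, g_{m+1} ∈ G, (∏_{i=1}^{m+1} (τ_{g_i} − 1)) * f = 0. -/
open scoped BigOperators

/-- Action of the integral group ring `ℤ[A]` on functions `A → B`:
`(τ_a * f)(x) = f(x + a)`, extended linearly. -/
noncomputable def groupRingAct {A B : Type*} [AddCommGroup A] [AddCommGroup B]
    (r : AddMonoidAlgebra ℤ A) (f : A → B) : A → B :=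
  fun x => r.coeff.sum fun a z => z • f (x + a)

/-- The augmentation ideal of the group ring `R[A]`. -/
noncomputable def augIdealR (R : Type*) (A : Type*) [CommRing R] [AddCommGroup A] :
    Ideal (AddMonoidAlgebra R A) :=
  Ideal.span {r : AddMonoidAlgebra R A | ∃ a : A, r = AddMonoidAlgebra.single a 1 - 1}

/-- The augmentation ideal of `ℤ[A]`. -/
noncomputable def augIdeal (A : Type*) [AddCommGroup A] : Ideal (AddMonoidAlgebra ℤ A) :=
  augIdealR ℤ A

/-- The functional degree of `f : A → B`: the least `n` with `I^(n+1) * f = 0`,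
where `I` is the augmentation ideal of `ℤ[A]`; `⊤` if there is no such `n`. -/
noncomputable def fdeg {A B : Type*} [AddCommGroup A] [AddCommGroup B] (f : A → B) : ℕ∞ :=
  sInf {N : ℕ∞ | ∃ n : ℕ, N = (n : ℕ∞) ∧
    ∀ r ∈ augIdeal A ^ (n + 1), groupRingAct r f = 0}

/-!
Both sides concern the annihilator of `f` in `ℤ[A]`, which is an ideal because the action is
multiplicative. Since `τ_{a+b} - 1 = τ_a (τ_b - 1) + (τ_a - 1)` and
`τ_{-a} - 1 = -τ_{-a} (τ_a - 1)`, the elements `τ_g - 1` with `g ∈ G` already span the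
augmentation ideal `I`, so `I^(m+1)` is spanned by their `(m+1)`-fold products.
-/

open AddMonoidAlgebra

section GroupRingAction

variable {A B : Type*} [AddCommGroup A] [AddCommGroup B]

lemma groupRingAct_zero_left (f : A → B) : groupRingAct (0 : AddMonoidAlgebra ℤ A) f = 0 := by
  funext x
  simp [groupRingAct]

lemma groupRingAct_add_left (r s : AddMonoidAlgebra ℤ A) (f : A → B) :
    groupRingAct (r + s) f = groupRingAct r f + groupRingAct s f := by
  funext x
  simp only [groupRingAct, Pi.add_apply, coeff_add]
  exact Finsupp.sum_add_index' (fun _ => zero_smul ℤ _) (fun _ _ _ => add_smul _ _ _)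

lemma groupRingAct_zero_right (r : AddMonoidAlgebra ℤ A) : groupRingAct r (0 : A → B) = 0 := by
  funext x
  simp [groupRingAct]

lemma groupRingAct_add_right (r : AddMonoidAlgebra ℤ A) (f h : A → B) :
    groupRingAct r (f + h) = groupRingAct r f + groupRingAct r h := by
  funext x
  simp only [groupRingAct, Pi.add_apply, smul_add]
  exact Finsupp.sum_add

lemma groupRingAct_single_apply (a : A) (z : ℤ) (f : A → B) (x : A) :
    groupRingAct (single a z) f x = z • f (x + a) := by
  simp [groupRingAct, coeff_single, Finsupp.sum_single_index]

lemma groupRingAct_mul (r s : AddMonoidAlgebra ℤ A) (f : A → B) :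
    groupRingAct (r * s) f = groupRingAct r (groupRingAct s f) := by
  induction r using AddMonoidAlgebra.induction_linear with
  | zero => simp only [zero_mul, groupRingAct_zero_left]
  | add p q hp hq => rw [add_mul, groupRingAct_add_left, groupRingAct_add_left, hp, hq]
  | single a z =>
    induction s using AddMonoidAlgebra.induction_linear with
    | zero => simp only [mul_zero, groupRingAct_zero_left, groupRingAct_zero_right]
    | add p q hp hq =>
      rw [mul_add, groupRingAct_add_left, groupRingAct_add_left, groupRingAct_add_right, hp, hq]
    | single b w =>
      funext x
      rw [single_mul_single, groupRingAct_single_apply, groupRingAct_single_apply,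
        groupRingAct_single_apply, mul_smul, add_assoc]

noncomputable def groupRingAnnihilator (f : A → B) : Ideal (AddMonoidAlgebra ℤ A) where
  carrier := {r | groupRingAct r f = 0}
  zero_mem' := groupRingAct_zero_left f
  add_mem' {r s} (hr : groupRingAct r f = 0) (hs : groupRingAct s f = 0) :=
    show groupRingAct (r + s) f = 0 by rw [groupRingAct_add_left, hr, hs, add_zero]
  smul_mem' c r (hr : groupRingAct r f = 0) :=
    show groupRingAct (c * r) f = 0 by rw [groupRingAct_mul, hr, groupRingAct_zero_right]

@[simp]
lemma mem_groupRingAnnihilator {f : A → B} {r : AddMonoidAlgebra ℤ A} :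
    r ∈ groupRingAnnihilator f ↔ groupRingAct r f = 0 := Iff.rfl

end GroupRingAction

lemma augIdealR_eq_span_of_closure_eq_top {R A : Type*} [CommRing R] [AddCommGroup A]
    {G : Set A} (hG : AddSubgroup.closure G = ⊤) :
    augIdealR R A = Ideal.span {r | ∃ g ∈ G, r = single g (1 : R) - 1} := by
  set J := Ideal.span {r | ∃ g ∈ G, r = single g (1 : R) - 1}
  refine le_antisymm ?_ (Ideal.span_mono fun r ⟨g, _, hr⟩ => ⟨g, hr⟩)
  rw [augIdealR, Ideal.span_le]
  rintro r ⟨a, rfl⟩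
  induction (hG ▸ AddSubgroup.mem_top a : a ∈ AddSubgroup.closure G)
    using AddSubgroup.closure_induction with
  | mem g hg => exact Ideal.subset_span ⟨g, hg, rfl⟩
  | zero => simp [← one_def]
  | add a b _ _ ha hb =>
    have hab : single (a + b) (1 : R) - 1 = single a 1 * (single b 1 - 1) + (single a 1 - 1) := by
      rw [mul_sub, single_mul_single, mul_one]
      ring
    exact hab ▸ J.add_mem (J.mul_mem_left _ hb) ha
  | neg a _ ha =>
    have hna : single (-a) (1 : R) - 1 = -(single (-a) 1 * (single a 1 - 1)) := by
      rw [mul_sub, single_mul_single, mul_one, neg_add_cancel, ← one_def]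
      ring
    exact hna ▸ J.neg_mem (J.mul_mem_left _ ha)

lemma fdeg_le_iff_pow_augIdeal_le_annihilator {A B : Type*} [AddCommGroup A] [AddCommGroup B]
    (f : A → B) (m : ℕ) :
    fdeg f ≤ (m : ℕ∞) ↔ augIdeal A ^ (m + 1) ≤ groupRingAnnihilator f := by
  refine ⟨fun h => ?_, fun h => sInf_le ⟨m, rfl, fun r hr => h hr⟩⟩
  obtain ⟨_, ⟨n, rfl, hn⟩, hlt⟩ := sInf_lt_iff.mp (ENat.lt_natCast_add_one_iff.mpr h)
  have hnm : n ≤ m := by exact_mod_cast ENat.lt_natCast_add_one_iff.mp hlt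
  exact fun r hr => hn r (Ideal.pow_le_pow_right (by omega) hr)

theorem fdeg_le_iff_generators {A B : Type*} [AddCommGroup A] [AddCommGroup B]
    (G : Set A) (hG : AddSubgroup.closure G = ⊤) (f : A → B) (m : ℕ) :
    fdeg f ≤ (m : ℕ∞) ↔
      ∀ g : Fin (m + 1) → A, (∀ i, g i ∈ G) →
        groupRingAct (∏ i : Fin (m + 1), (AddMonoidAlgebra.single (g i) (1 : ℤ) - 1)) f = 0 := by
  rw [fdeg_le_iff_pow_augIdeal_le_annihilator, augIdeal,
    augIdealR_eq_span_of_closure_eq_top hG, Ideal.span, Submodule.span_pow, Submodule.span_le]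
  constructor
  · intro h g hg
    refine h (Set.mem_pow.mpr ⟨fun i => ⟨_, g i, hg i, rfl⟩, ?_⟩)
    rw [List.prod_ofFn]
  · rintro h _ hr
    obtain ⟨e, rfl⟩ := Set.mem_pow.mp hr
    choose g hgG hge using fun i => (e i).2
    simpa only [SetLike.mem_coe, mem_groupRingAnnihilator, List.prod_ofFn, hge] using h g hgG
end

section
/- Let A, B, C be abelian groups and let f : A → B and g : B → C have finite functional degrees. Then fdeg(g ∘ f) ≤ fdeg(g) · fdeg(f). -/
open scoped BigOperators

/-!
Write `[f] : A → ℤ[B]` for `y ↦ single (f y) 1`. Then `(r • (g ∘ f)) x = ((r • [f]) x • g) 0`,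
so with `n = fdeg f` and `k = fdeg g` it suffices that `r • [f]` takes values in `I_B^(k+1)`
for every `r ∈ I_A^(kn+1)`. As `I_A^N` is spanned by products of `N` elements `τ_a - 1`, which
act as forward differences, this says that `N`-fold differences of `[f]` lie in `I_B^⌈N/n⌉`.
That is proved by induction on `n` from `Δ_a [f] = [f] * ([Δ_a f] - 1)`, where `Δ_a f` has
degree `n - 1`, and the Leibniz rule for `Δ_a`, under which the `I_B`-adic orders of the
factors add up.
-/

open AddMonoidAlgebra fwdDiff
open scoped Pointwise

section GroupRingAct

variable {A M : Type*} [AddCommGroup A] [AddCommGroup M]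

@[simp] lemma groupRingAct_single (a : A) (z : ℤ) (u : A → M) :
    groupRingAct (single a z) u = fun x => z • u (x + a) := by
  funext x
  simp [groupRingAct, coeff_single, Finsupp.sum_single_index]

@[simp] lemma zero_groupRingAct (u : A → M) : groupRingAct 0 u = 0 := by
  funext x
  simp [groupRingAct]

lemma add_groupRingAct (r s : AddMonoidAlgebra ℤ A) (u : A → M) :
    groupRingAct (r + s) u = groupRingAct r u + groupRingAct s u := by
  funext x
  simp only [groupRingAct, Pi.add_apply, coeff_add]
  exact Finsupp.sum_add_index' (by simp) (by simp [add_smul])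

lemma sub_groupRingAct (r s : AddMonoidAlgebra ℤ A) (u : A → M) :
    groupRingAct (r - s) u = groupRingAct r u - groupRingAct s u := by
  funext x
  simp only [groupRingAct, Pi.sub_apply, coeff_sub]
  exact Finsupp.sum_sub_index (by simp [sub_smul])

@[simp] lemma one_groupRingAct (u : A → M) : groupRingAct 1 u = u := by
  rw [one_def, groupRingAct_single]
  simp

lemma mul_groupRingAct (r s : AddMonoidAlgebra ℤ A) (u : A → M) :
    groupRingAct (r * s) u = groupRingAct r (groupRingAct s u) := by
  induction r using AddMonoidAlgebra.induction_linear with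
  | zero => simp
  | add r r' hr hr' => rw [add_mul, add_groupRingAct, hr, hr', add_groupRingAct]
  | single a z =>
    induction s using AddMonoidAlgebra.induction_linear with
    | zero => funext x; simp
    | add s s' hs hs' =>
      rw [mul_add, add_groupRingAct, hs, hs', add_groupRingAct]
      funext x
      simp [smul_add]
    | single b w =>
      funext x
      simp [single_mul_single, mul_smul, add_assoc]

lemma single_sub_one_groupRingAct (a : A) (u : A → M) :
    groupRingAct (single a 1 - 1) u = Δ_[a] u := by
  rw [sub_groupRingAct, groupRingAct_single, one_groupRingAct]
  funext x
  simp [fwdDiff]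

lemma groupRingAct_apply_mem (J : AddSubgroup M) (r : AddMonoidAlgebra ℤ A) {u : A → M}
    (hu : ∀ x, u x ∈ J) (x : A) : groupRingAct r u x ∈ J :=
  AddSubgroup.sum_mem _ fun a _ => AddSubgroup.zsmul_mem _ (hu (x + a)) _

end GroupRingAct

section IterFwdDiff

variable {A M : Type*} [AddCommMonoid A] [AddCommGroup M]

def iterFwdDiff : List A → (A → M) → A → M
  | [], u => u
  | a :: l, u => iterFwdDiff l (Δ_[a] u)

@[simp] lemma iterFwdDiff_nil (u : A → M) : iterFwdDiff [] u = u := rfl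

@[simp] lemma iterFwdDiff_cons (a : A) (l : List A) (u : A → M) :
    iterFwdDiff (a :: l) u = iterFwdDiff l (Δ_[a] u) := rfl

lemma iterFwdDiff_add (l : List A) (u v : A → M) :
    iterFwdDiff l (u + v) = iterFwdDiff l u + iterFwdDiff l v := by
  induction l generalizing u v with
  | nil => rfl
  | cons a l ih => simp [ih]

@[simp] lemma iterFwdDiff_zero (l : List A) : iterFwdDiff l (0 : A → M) = 0 := by
  induction l with
  | nil => rfl
  | cons a l ih =>
    have h0 : Δ_[a] (0 : A → M) = 0 := funext fun _ => sub_self 0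
    rw [iterFwdDiff_cons, h0, ih]

lemma iterFwdDiff_comp_add (l : List A) (v : A → M) (a : A) :
    iterFwdDiff l (fun y => v (y + a)) = fun y => iterFwdDiff l v (y + a) := by
  induction l generalizing v with
  | nil => rfl
  | cons b l ih =>
    simp only [iterFwdDiff_cons, ← ih]
    congr 1
    funext y
    exact fwdDiff_comp_add b v a y

lemma fwdDiff_mul {R : Type*} [Ring R] (a : A) (u v : A → R) :
    Δ_[a] (u * v) = Δ_[a] u * (fun y => v (y + a)) + u * Δ_[a] v := by
  funext y
  simp only [fwdDiff, Pi.mul_apply, Pi.add_apply]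
  noncomm_ring

/-- The hypotheses only concern differences of order at most `L`, so that the estimate can be fed
back into an induction on the order. -/
theorem iterFwdDiff_mul_mem_pow {R : Type*} [CommRing R] (I : Ideal R) (L : ℕ)
    {p q r : ℕ → ℕ} (hpqr : ∀ i j, r (i + j) ≤ p i + q j) {u v : A → R}
    (hu : ∀ m : List A, m.length ≤ L → ∀ x, iterFwdDiff m u x ∈ I ^ p m.length)
    (hv : ∀ m : List A, m.length ≤ L → ∀ x, iterFwdDiff m v x ∈ I ^ q m.length)
    (l : List A) (hl : l.length ≤ L) (x : A) : iterFwdDiff l (u * v) x ∈ I ^ r l.length := by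
  induction l generalizing L p q r u v with
  | nil =>
    refine Ideal.pow_le_pow_right (hpqr 0 0) ?_
    rw [pow_add]
    exact Ideal.mul_mem_mul (hu [] hl x) (hv [] hl x)
  | cons a l ih =>
    obtain ⟨L, rfl⟩ : ∃ L', L = L' + 1 := ⟨L - 1, by simp at hl; omega⟩
    rw [iterFwdDiff_cons, fwdDiff_mul, iterFwdDiff_add]
    refine add_mem (ih L (p := fun i => p (i + 1)) (q := q) (r := fun i => r (i + 1)) ?_ ?_ ?_ ?_)
      (ih L (p := p) (q := fun j => q (j + 1)) (r := fun i => r (i + 1)) ?_ ?_ ?_ ?_)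
    · intro i j
      simpa [Nat.add_right_comm] using hpqr (i + 1) j
    · exact fun m hm => hu (a :: m) (by simpa using hm)
    · intro m hm y
      rw [iterFwdDiff_comp_add]
      exact hv m (by omega) (y + a)
    · simpa using hl
    · intro i j
      simpa [Nat.add_assoc] using hpqr i (j + 1)
    · exact fun m hm => hu m (by omega)
    · exact fun m hm => hv (a :: m) (by simpa using hm)
    · simpa using hl

end IterFwdDiff

lemma mem_pow_setOf_eq_iff {ι R : Type*} [Monoid R] (g : ι → R) (N : ℕ) (s : R) :
    s ∈ {r | ∃ i, r = g i} ^ N ↔ ∃ l : List ι, l.length = N ∧ (l.map g).prod = s := by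
  induction N generalizing s with
  | zero => simp [eq_comm]
  | succ N ih =>
    simp only [pow_succ', Set.mem_mul, ih, Set.mem_ofPred_eq]
    constructor
    · rintro ⟨_, ⟨i, rfl⟩, _, ⟨l, hl, rfl⟩, rfl⟩
      exact ⟨i :: l, by simp [hl], by simp⟩
    · rintro ⟨_ | ⟨i, l⟩, hl, rfl⟩
      · simp at hl
      · exact ⟨g i, ⟨i, rfl⟩, _, ⟨l, by simpa using hl, rfl⟩, by simp⟩

section Augmentation

variable {A M : Type*} [AddCommGroup A] [AddCommGroup M]

lemma augIdeal_pow_eq_span (N : ℕ) :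
    augIdeal A ^ N =
      Ideal.span ({r | ∃ a : A, r = single a (1 : ℤ) - 1} ^ N) := by
  rw [augIdeal, augIdealR, Ideal.span, Submodule.span_pow]

lemma iterFwdDiff_eq_groupRingAct (l : List A) (u : A → M) :
    iterFwdDiff l u = groupRingAct (l.map fun a => single a (1 : ℤ) - 1).prod u := by
  induction l generalizing u with
  | nil => simp
  | cons a l ih =>
    rw [iterFwdDiff_cons, ih, List.map_cons, List.prod_cons, mul_comm, mul_groupRingAct,
      single_sub_one_groupRingAct]

lemma iterFwdDiff_eq_zero_of_augIdeal_pow {N : ℕ} {u : A → M}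
    (hu : ∀ r ∈ augIdeal A ^ N, groupRingAct r u = 0) (l : List A) (hl : l.length = N) :
    iterFwdDiff l u = 0 := by
  rw [iterFwdDiff_eq_groupRingAct]
  refine hu _ ?_
  rw [augIdeal_pow_eq_span]
  exact Ideal.subset_span ((mem_pow_setOf_eq_iff _ N _).2 ⟨l, hl, rfl⟩)

lemma groupRingAct_apply_mem_of_iterFwdDiff (J : AddSubgroup M) {N : ℕ} {u : A → M}
    (hu : ∀ l : List A, l.length = N → ∀ x, iterFwdDiff l u x ∈ J)
    {r : AddMonoidAlgebra ℤ A} (hr : r ∈ augIdeal A ^ N) (x : A) :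
    groupRingAct r u x ∈ J := by
  rw [augIdeal_pow_eq_span] at hr
  induction hr using Submodule.span_induction generalizing x with
  | mem s hs =>
    obtain ⟨l, hl, rfl⟩ := (mem_pow_setOf_eq_iff _ N s).1 hs
    rw [← iterFwdDiff_eq_groupRingAct]
    exact hu l hl x
  | zero => simp
  | add s t _ _ hs ht =>
    rw [add_groupRingAct]
    exact add_mem (hs x) (ht x)
  | smul c s _ hs =>
    rw [smul_eq_mul, mul_groupRingAct]
    exact groupRingAct_apply_mem J c hs x

end Augmentation

lemma Nat.add_div_le_add_pred_div_add_div (i j n : ℕ) :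
    (i + j) / (n + 1) ≤ (i + n) / (n + 1) + j / (n + 1) := by
  have hi := Nat.lt_div_mul_add (a := i + n) n.succ_pos
  have hj := Nat.div_add_mod j (n + 1)
  have hr := Nat.mod_lt j n.succ_pos
  rw [← Nat.lt_succ_iff, Nat.div_lt_iff_lt_mul n.succ_pos]
  nlinarith

lemma Nat.div_succ_mul_lt {j : ℕ} (hj : j ≠ 0) (n : ℕ) : j / (n + 1) * n < j := by
  have h := Nat.div_mul_le_self j (n + 1)
  rcases Nat.eq_zero_or_pos (j / (n + 1)) with h0 | hpos
  · rw [h0]; omega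
  · nlinarith

lemma Nat.succ_le_add_div_succ {K m n : ℕ} (h : K * (n + 1) < m) :
    K + 1 ≤ (m + n) / (n + 1) := by
  rw [Nat.le_div_iff_mul_le n.succ_pos]
  nlinarith

section SingleComp

variable {A B k : Type*} [AddCommGroup A] [AddCommGroup B] [CommRing k]

lemma single_sub_one_mem_augIdealR (b : B) : single b (1 : k) - 1 ∈ augIdealR k B :=
  Ideal.subset_span ⟨b, rfl⟩

lemma fwdDiff_single_comp (f : A → B) (a : A) :
    Δ_[a] (fun y => single (f y) (1 : k)) =
      (fun y => single (f y) 1) * fun y => single (Δ_[a] f y) 1 - 1 := by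
  funext y
  simp [fwdDiff, mul_sub, single_mul_single]

lemma iterFwdDiff_single_comp_sub_one_mem_pow {g : A → B} {n : ℕ}
    (hg : ∀ (K : ℕ) (l : List A), K * n < l.length → ∀ x,
      iterFwdDiff l (fun y => single (g y) (1 : k)) x ∈ augIdealR k B ^ (K + 1))
    (m : List A) (x : A) :
    iterFwdDiff m (fun y => single (g y) (1 : k) - 1) x ∈
      augIdealR k B ^ (m.length / (n + 1) + 1) := by
  cases m with
  | nil => simpa using single_sub_one_mem_augIdealR (g x)
  | cons b m =>
    have hconst :
        Δ_[b] (fun y => single (g y) (1 : k) - 1) = Δ_[b] fun y => single (g y) 1 := by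
      funext y
      simp [fwdDiff]
    rw [iterFwdDiff_cons, hconst, ← iterFwdDiff_cons]
    exact hg _ _ (Nat.div_succ_mul_lt (by simp) n) x

lemma iterFwdDiff_single_comp_mem_pow_of_fwdDiff {f : A → B} {n : ℕ}
    (hf : ∀ (a : A) (m : List A) x, iterFwdDiff m (fun y => single (Δ_[a] f y) (1 : k) - 1) x ∈
      augIdealR k B ^ (m.length / (n + 1) + 1))
    (L : ℕ) (l : List A) (hl : l.length ≤ L) (x : A) :
    iterFwdDiff l (fun y => single (f y) (1 : k)) x ∈
      augIdealR k B ^ ((l.length + n) / (n + 1)) := by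
  induction L generalizing l x with
  | zero =>
    simp [List.length_eq_zero_iff.1 (Nat.le_zero.1 hl), Nat.div_eq_of_lt n.lt_succ_self]
  | succ L ih =>
    cases l with
    | nil => simp [Nat.div_eq_of_lt n.lt_succ_self]
    | cons a l =>
      have hexp : (l.length + 1 + n) / (n + 1) = l.length / (n + 1) + 1 := by
        rw [show l.length + 1 + n = l.length + (n + 1) by ring, Nat.add_div_right _ n.succ_pos]
      rw [iterFwdDiff_cons, fwdDiff_single_comp, List.length_cons, hexp]
      refine iterFwdDiff_mul_mem_pow _ L (p := fun i => (i + n) / (n + 1))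
        (q := fun j => j / (n + 1) + 1) (r := fun j => j / (n + 1) + 1) ?_ ih
        (fun m _ => hf a m) l (by simpa using hl) x
      intro i j
      have := Nat.add_div_le_add_pred_div_add_div i j n
      omega

theorem iterFwdDiff_single_comp_mem_pow (n : ℕ) {f : A → B}
    (hf : ∀ l : List A, l.length = n + 1 → iterFwdDiff l f = 0)
    (K : ℕ) (l : List A) (hl : K * n < l.length) (x : A) :
    iterFwdDiff l (fun y => single (f y) (1 : k)) x ∈ augIdealR k B ^ (K + 1) := by
  induction n generalizing f K l x with
  | zero =>
    obtain ⟨a, l, rfl⟩ := List.exists_cons_of_length_pos (by simpa using hl)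
    have hconst : Δ_[a] f = 0 := hf [a] rfl
    have hzero : Δ_[a] (fun y => single (f y) (1 : k)) = 0 := by
      rw [fwdDiff_single_comp, hconst]
      funext y
      simp [← one_def]
    rw [iterFwdDiff_cons, hzero, iterFwdDiff_zero]
    exact zero_mem _
  | succ n ih =>
    have hdiff (a : A) := iterFwdDiff_single_comp_sub_one_mem_pow (k := k)
      (ih (f := Δ_[a] f) fun l hl => hf (a :: l) (by simp [hl]))
    exact Ideal.pow_le_pow_right (Nat.succ_le_add_div_succ hl)
      (iterFwdDiff_single_comp_mem_pow_of_fwdDiff hdiff _ l le_rfl x)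

end SingleComp

section Composition

variable {A B C : Type*} [AddCommGroup A] [AddCommGroup B] [AddCommGroup C]

lemma groupRingAct_comp_apply (f : A → B) (g : B → C) (r : AddMonoidAlgebra ℤ A) (x : A) :
    groupRingAct r (g ∘ f) x =
      groupRingAct (groupRingAct r (fun y => single (f y) (1 : ℤ)) x) g 0 := by
  induction r using AddMonoidAlgebra.induction_linear with
  | zero => simp
  | add r s hr hs => simp only [add_groupRingAct, Pi.add_apply, hr, hs]
  | single a z => simp [smul_single]

theorem groupRingAct_single_comp_mem_augIdeal_pow {n : ℕ} {f : A → B}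
    (hf : ∀ r ∈ augIdeal A ^ (n + 1), groupRingAct r f = 0) (K : ℕ)
    {r : AddMonoidAlgebra ℤ A} (hr : r ∈ augIdeal A ^ (K * n + 1)) (x : A) :
    groupRingAct r (fun y => single (f y) (1 : ℤ)) x ∈ augIdeal B ^ (K + 1) :=
  groupRingAct_apply_mem_of_iterFwdDiff (augIdeal B ^ (K + 1)).toAddSubgroup
    (fun l hl => iterFwdDiff_single_comp_mem_pow n
      (iterFwdDiff_eq_zero_of_augIdeal_pow hf) K l (by omega)) hr x

end Composition

lemma exists_fdeg_eq_of_lt_top {X Y : Type*} [AddCommGroup X] [AddCommGroup Y] {h : X → Y}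
    (hh : fdeg h < ⊤) :
    ∃ n : ℕ, fdeg h = n ∧ ∀ r ∈ augIdeal X ^ (n + 1), groupRingAct r h = 0 := by
  obtain ⟨N, hN, -⟩ := sInf_lt_iff.1 hh
  exact csInf_mem ⟨N, hN⟩

lemma fdeg_le_of_augIdeal_pow {X Y : Type*} [AddCommGroup X] [AddCommGroup Y] {h : X → Y}
    {n : ℕ} (hh : ∀ r ∈ augIdeal X ^ (n + 1), groupRingAct r h = 0) : fdeg h ≤ n :=
  sInf_le ⟨n, rfl, hh⟩

theorem fdeg_comp_le {A B C : Type*} [AddCommGroup A] [AddCommGroup B] [AddCommGroup C]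
    (f : A → B) (g : B → C) (hf : fdeg f < ⊤) (hg : fdeg g < ⊤) :
    fdeg (g ∘ f) ≤ fdeg g * fdeg f := by
  obtain ⟨nf, hnf, hf⟩ := exists_fdeg_eq_of_lt_top hf
  obtain ⟨ng, hng, hg⟩ := exists_fdeg_eq_of_lt_top hg
  rw [hnf, hng, ← Nat.cast_mul]
  refine fdeg_le_of_augIdeal_pow fun r hr => funext fun x => ?_
  rw [groupRingAct_comp_apply, hg _ (groupRingAct_single_comp_mem_augIdeal_pow hf ng hr x)]
  rfl
end

section
/- Let A be an abelian group, R a (not necessarily commutative) ring, and f, g : A → R. Then fdeg(f · g) ≤ fdeg(f) + fdeg(g), where (f·g)(x) = f(x)·g(x). -/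
open scoped BigOperators

/-! The action of `ℤ[A]` on `A → B` is the algebra map induced by translation, and the
augmentation ideal is generated by the differences `τ_a - 1`. Translation is multiplicative on
pointwise products, which gives the Leibniz rule `Δ_a (P * Q) = Δ_a P * τ_a Q + P * Δ_a Q`.
Hence, by induction on `k`, `I^k • (f * g)` lies in the `ℤ`-span of the products
`(p • f) * (q • g)` with `p ∈ I^i`, `q ∈ I^j`, `i + j = k`. For `k = n + m + 1` every such
product vanishes, since `i > n` or `j > m`. -/

section GroupRingAction

variable (A B : Type*) [AddCommGroup A] [AddCommGroup B]

noncomputable def translationHom : Multiplicative A →* Module.End ℤ (A → B) where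
  toFun a := LinearMap.funLeft ℤ B (· + a.toAdd)
  map_one' := by ext; simp
  map_mul' a b := by ext; simp [add_assoc]

noncomputable def groupRingActHom : AddMonoidAlgebra ℤ A →ₐ[ℤ] Module.End ℤ (A → B) :=
  AddMonoidAlgebra.lift ℤ _ A (translationHom A B)

variable {A B}

theorem groupRingAct_eq (r : AddMonoidAlgebra ℤ A) (f : A → B) :
    groupRingAct r f = groupRingActHom A B r f := by
  ext x
  simp [groupRingActHom, AddMonoidAlgebra.lift_apply, groupRingAct, Finsupp.sum, translationHom]

theorem groupRingActHom_mul_apply (r s : AddMonoidAlgebra ℤ A) (f : A → B) :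
    groupRingActHom A B (r * s) f = groupRingActHom A B r (groupRingActHom A B s f) := by
  rw [map_mul, Module.End.mul_apply]

@[simp] theorem groupRingActHom_single_one_apply (a : A) (f : A → B) (x : A) :
    groupRingActHom A B (AddMonoidAlgebra.single a 1) f x = f (x + a) := by
  simp [groupRingActHom, translationHom]

end GroupRingAction

section Leibniz

open AddMonoidAlgebra

variable {A R : Type*} [AddCommGroup A] [NonUnitalNonAssocRing R]

theorem groupRingActHom_single_one_mul (a : A) (P Q : A → R) :
    groupRingActHom A R (single a 1) (P * Q) =
      groupRingActHom A R (single a 1) P * groupRingActHom A R (single a 1) Q := by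
  ext; simp

theorem groupRingActHom_single_one_sub_one_mul (a : A) (P Q : A → R) :
    groupRingActHom A R (single a 1 - 1) (P * Q) =
      groupRingActHom A R (single a 1 - 1) P * groupRingActHom A R (single a 1) Q +
        P * groupRingActHom A R (single a 1 - 1) Q := by
  simp only [map_sub, map_one, LinearMap.sub_apply, Module.End.one_apply,
    groupRingActHom_single_one_mul, sub_mul, mul_sub]
  abel

variable (f g : A → R)

def productSpan (k : ℕ) : Submodule ℤ (A → R) :=
  Submodule.span ℤ {h | ∃ i j : ℕ, i + j = k ∧ ∃ p ∈ augIdeal A ^ i, ∃ q ∈ augIdeal A ^ j,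
    h = groupRingActHom A R p f * groupRingActHom A R q g}

variable {f g}

theorem groupRingActHom_mem_productSpan (u : AddMonoidAlgebra ℤ A) {k : ℕ} {h : A → R}
    (hh : h ∈ productSpan f g k) : groupRingActHom A R u h ∈ productSpan f g k := by
  induction hh using Submodule.span_induction with
  | mem h hgen =>
    obtain ⟨i, j, hij, p, hp, q, hq, rfl⟩ := hgen
    induction u using AddMonoidAlgebra.induction_linear with
    | zero => simp
    | add u v hu hv => simpa only [map_add, LinearMap.add_apply] using add_mem hu hv
    | single a z =>
      rw [← mul_one z, ← smul_single', map_zsmul, LinearMap.smul_apply,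
        groupRingActHom_single_one_mul, ← groupRingActHom_mul_apply, ← groupRingActHom_mul_apply]
      exact Submodule.smul_mem _ _ <| Submodule.subset_span
        ⟨i, j, hij, _, Ideal.mul_mem_left _ _ hp, _, Ideal.mul_mem_left _ _ hq, rfl⟩
  | zero => simp
  | add _ _ _ _ hx hy => simpa only [map_add] using add_mem hx hy
  | smul z _ _ hx => simpa only [map_zsmul] using Submodule.smul_mem _ z hx

theorem groupRingActHom_mem_productSpan_succ {t : AddMonoidAlgebra ℤ A} (ht : t ∈ augIdeal A)
    {k : ℕ} {h : A → R} (hh : h ∈ productSpan f g k) :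
    groupRingActHom A R t h ∈ productSpan f g (k + 1) := by
  induction hh using Submodule.span_induction with
  | mem h hgen =>
    obtain ⟨i, j, hij, p, hp, q, hq, rfl⟩ := hgen
    induction ht using Submodule.span_induction with
    | mem t htgen =>
      obtain ⟨a, rfl⟩ := htgen
      have hδ : single a 1 - 1 ∈ augIdeal A := Ideal.subset_span ⟨a, rfl⟩
      rw [groupRingActHom_single_one_sub_one_mul, ← groupRingActHom_mul_apply,
        ← groupRingActHom_mul_apply, ← groupRingActHom_mul_apply]
      refine add_mem (Submodule.subset_span ⟨i + 1, j, by omega, _, ?_, _, ?_, rfl⟩)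
        (Submodule.subset_span ⟨i, j + 1, by omega, _, hp, _, ?_, rfl⟩)
      · exact pow_succ' (augIdeal A) i ▸ Ideal.mul_mem_mul hδ hp
      · exact Ideal.mul_mem_left _ _ hq
      · exact pow_succ' (augIdeal A) j ▸ Ideal.mul_mem_mul hδ hq
    | zero => simp
    | add _ _ _ _ hx hy => simpa only [map_add, LinearMap.add_apply] using add_mem hx hy
    | smul u t _ ht =>
      rw [smul_eq_mul, groupRingActHom_mul_apply]
      exact groupRingActHom_mem_productSpan u ht
  | zero => simp
  | add _ _ _ _ hx hy => simpa only [map_add] using add_mem hx hy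
  | smul z _ _ hx => simpa only [map_zsmul] using Submodule.smul_mem _ z hx

theorem groupRingActHom_mul_mem_productSpan {k : ℕ} {r : AddMonoidAlgebra ℤ A}
    (hr : r ∈ augIdeal A ^ k) : groupRingActHom A R r (f * g) ∈ productSpan f g k := by
  induction k generalizing r with
  | zero =>
    refine groupRingActHom_mem_productSpan r (Submodule.subset_span ⟨0, 0, rfl, 1, ?_, 1, ?_, ?_⟩)
    all_goals simp
  | succ k ih =>
    rw [pow_succ'] at hr
    refine Submodule.mul_induction_on hr (fun t ht s hs => ?_) (fun _ _ hx hy => ?_)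
    · rw [groupRingActHom_mul_apply]
      exact groupRingActHom_mem_productSpan_succ ht (ih hs)
    · simpa only [map_add, LinearMap.add_apply] using add_mem hx hy

theorem productSpan_eq_bot {n m : ℕ}
    (hf : ∀ p ∈ augIdeal A ^ (n + 1), groupRingActHom A R p f = 0)
    (hg : ∀ q ∈ augIdeal A ^ (m + 1), groupRingActHom A R q g = 0) :
    productSpan f g (n + m + 1) = ⊥ := by
  refine Submodule.span_eq_bot.2 ?_
  rintro _ ⟨i, j, hij, p, hp, q, hq, rfl⟩
  rcases le_or_gt (n + 1) i with hi | hi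
  · rw [hf p (Ideal.pow_le_pow_right hi hp), zero_mul]
  · rw [hg q (Ideal.pow_le_pow_right (by omega) hq), mul_zero]

theorem groupRingActHom_mul_eq_zero {n m : ℕ}
    (hf : ∀ p ∈ augIdeal A ^ (n + 1), groupRingActHom A R p f = 0)
    (hg : ∀ q ∈ augIdeal A ^ (m + 1), groupRingActHom A R q g = 0)
    {r : AddMonoidAlgebra ℤ A} (hr : r ∈ augIdeal A ^ (n + m + 1)) :
    groupRingActHom A R r (f * g) = 0 := by
  simpa [productSpan_eq_bot hf hg] using groupRingActHom_mul_mem_productSpan (f := f) (g := g) hr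

end Leibniz

theorem fdeg_le_natCast_iff {A B : Type*} [AddCommGroup A] [AddCommGroup B] {f : A → B}
    {n : ℕ} :
    fdeg f ≤ n ↔ ∀ r ∈ augIdeal A ^ (n + 1), groupRingActHom A B r f = 0 := by
  simp only [← groupRingAct_eq]
  refine ⟨fun h => ?_, fun h => sInf_le ⟨n, rfl, h⟩⟩
  obtain ⟨m, hm, hkill⟩ := csInf_mem (s := {N : ℕ∞ | ∃ n : ℕ, N = (n : ℕ∞) ∧
      ∀ r ∈ augIdeal A ^ (n + 1), groupRingAct r f = 0}) <| by
    refine Set.nonempty_iff_ne_empty.2 fun hempty => ?_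
    rw [fdeg, hempty, sInf_empty, top_le_iff] at h
    exact ENat.top_ne_natCast n h.symm
  rw [fdeg, hm, Nat.cast_le] at h
  exact fun r hr => hkill r (Ideal.pow_le_pow_right (by omega) hr)

theorem fdeg_mul_le {A R : Type*} [AddCommGroup A] [Ring R]
    (f g : A → R) :
    fdeg (fun x : A => f x * g x) ≤ fdeg f + fdeg g := by
  cases hf : fdeg f using ENat.recTopCoe with
  | top => simp
  | coe n =>
    cases hg : fdeg g using ENat.recTopCoe with
    | top => simp
    | coe m =>
      rw [← Nat.cast_add, fdeg_le_natCast_iff]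
      exact fun r hr => groupRingActHom_mul_eq_zero (fdeg_le_natCast_iff.1 hf.le)
        (fdeg_le_natCast_iff.1 hg.le) hr
end

section
/- Let A and B be periodic (torsion) abelian groups, both nontrivial. If sup{fdeg(f) : f : A → B} is finite, then there is a prime p such that both A and B are p-groups. -/
open scoped BigOperators

/-!
If `A` has an element `a` of prime order `p` and `B` an element `b` of prime order `q ≠ p`, the
function `δ_b = Pi.single 0 b` has infinite degree. Indeed `r • δ_b = 0` exactly when `r` vanishes
in `𝔽_q[A]`, and `(τ_a - 1)ᵐ` never does: `𝔽_q[⟨a⟩]` is semisimple by Maschke's theorem since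
`q ∤ p`, so it has no nonzero nilpotents. Hence all elements of prime order in `A` and `B` share
one order `p`, and every element of these torsion groups has `p`-power order.
-/

open AddMonoidAlgebra

section Torsion
variable {A : Type*} [AddMonoid A]

theorem exists_prime_addOrderOf [Nontrivial A] (hA : IsAddTorsion A) :
    ∃ a : A, (addOrderOf a).Prime := by
  obtain ⟨x, hx⟩ := exists_ne (0 : A)
  have hx₁ : addOrderOf x ≠ 1 := AddMonoid.addOrderOf_eq_one_iff.not.mpr hx
  have hdiv := addOrderOf_nsmul_addOrderOf_sub (hA x).addOrderOf_pos.ne' (Nat.minFac_dvd _)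
  exact ⟨_, hdiv ▸ Nat.minFac_prime hx₁⟩

theorem exists_prime_pow_nsmul_eq_zero {p : ℕ} {x : A} (hx : IsOfFinAddOrder x)
    (hp : ∀ a : A, (addOrderOf a).Prime → addOrderOf a = p) : ∃ n : ℕ, p ^ n • x = 0 := by
  have hx₀ := hx.addOrderOf_pos.ne'
  have hpow : addOrderOf x = p ^ (addOrderOf x).primeFactorsList.length := by
    refine Nat.eq_prime_pow_of_unique_prime_dvd hx₀ fun {d} hd hdvd => ?_
    have hdiv := addOrderOf_nsmul_addOrderOf_sub hx₀ hdvd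
    exact hdiv.symm.trans (hp _ (by rwa [hdiv]))
  exact ⟨_, hpow ▸ addOrderOf_nsmul_eq_zero x⟩

end Torsion

theorem not_isNilpotent_single_sub_one {k A : Type*} [Field k] [AddCommGroup A] {a : A}
    (ha : a ≠ 0) (hk : (addOrderOf a : k) ≠ 0) : ¬ IsNilpotent (single a (1 : k) - 1) := by
  -- `k[⟨a⟩]` is semisimple by Maschke's theorem, hence reduced.
  set H := AddSubgroup.zmultiples a
  have hcard : (Nat.card H : k) ≠ 0 := by rwa [Nat.card_zmultiples]
  have : NeZero (Nat.card H : k) := ⟨hcard⟩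
  have : Finite H := Nat.finite_of_card_ne_zero fun h => hcard (by rw [h, Nat.cast_zero])
  have hgen : single (⟨a, AddSubgroup.mem_zmultiples a⟩ : H) (1 : k) - 1 ≠ 0 := by
    rw [sub_ne_zero, one_def]
    exact fun h => ha (congrArg Subtype.val (single_left_injective one_ne_zero h))
  rintro ⟨m, hm⟩
  refine pow_ne_zero m hgen (mapDomain_injective (f := H.subtype) Subtype.val_injective ?_)
  rw [← mapDomainRingHom_apply, map_pow, map_sub, map_one, mapDomainRingHom_apply,
    mapDomain_single, mapDomain_zero]
  exact hm

section FunctionalDegree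
variable {A B : Type*} [AddCommGroup A] [AddCommGroup B]

theorem single_sub_one_mem_augIdeal (a : A) : single a 1 - 1 ∈ augIdeal A :=
  Ideal.subset_span ⟨a, rfl⟩

theorem groupRingAct_pi_single_zero [DecidableEq A] (r : AddMonoidAlgebra ℤ A) (b : B) (x : A) :
    groupRingAct r (Pi.single 0 b) x = r.coeff (-x) • b := by
  unfold groupRingAct
  rw [Finsupp.sum_eq_single (-x)]
  · simp
  · intro a _ ha
    rw [Pi.single_apply, if_neg, smul_zero]
    contrapose! ha
    exact eq_neg_of_add_eq_zero_right ha
  · simp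

theorem groupRingAct_pi_single_zero_eq_zero_iff [DecidableEq A] (r : AddMonoidAlgebra ℤ A)
    (b : B) : groupRingAct r (Pi.single 0 b) = 0 ↔
      mapRingHom A (Int.castRingHom (ZMod (addOrderOf b))) r = 0 := by
  have hsmul (z : ℤ) : z • b = 0 ↔ (z : ZMod (addOrderOf b)) = 0 := by
    rw [ZMod.intCast_zmod_eq_zero_iff_dvd, addOrderOf_dvd_iff_zsmul_eq_zero]
  rw [funext_iff, neg_surjective.forall]
  simp only [groupRingAct_pi_single_zero, Pi.zero_apply, hsmul, neg_neg, AddMonoidAlgebra.ext_iff,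
    Finsupp.ext_iff, coeff_mapRingHom, eq_intCast, coeff_zero, Finsupp.coe_zero]

theorem fdeg_eq_top_iff (f : A → B) :
    fdeg f = ⊤ ↔ ∀ n : ℕ, ∃ r ∈ augIdeal A ^ (n + 1), groupRingAct r f ≠ 0 := by
  simp only [fdeg, sInf_eq_top, Set.mem_ofPred_eq, forall_exists_index, and_imp]
  refine ⟨fun h n => ?_, fun h N n _ hn => absurd hn ?_⟩
  · by_contra! hn
    exact ENat.natCast_ne_top n (h n n rfl hn)
  · simpa using h n

theorem fdeg_pi_single_zero_eq_top [DecidableEq A] {a : A} {b : B} (ha : a ≠ 0)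
    (hb : (addOrderOf b).Prime) (hab : (addOrderOf a : ZMod (addOrderOf b)) ≠ 0) :
    fdeg (Pi.single 0 b : A → B) = ⊤ := by
  have : Fact (addOrderOf b).Prime := ⟨hb⟩
  refine (fdeg_eq_top_iff _).mpr fun n =>
    ⟨_, Ideal.pow_mem_pow (single_sub_one_mem_augIdeal a) (n + 1), fun h => ?_⟩
  rw [groupRingAct_pi_single_zero_eq_zero_iff, map_pow, map_sub, map_one, mapRingHom_single,
    map_one] at h
  exact not_isNilpotent_single_sub_one ha hab ⟨_, h⟩

theorem addOrderOf_eq_of_iSup_fdeg_lt_top (hfin : (⨆ f : A → B, fdeg f) < ⊤) {a : A} {b : B}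
    (ha : (addOrderOf a).Prime) (hb : (addOrderOf b).Prime) : addOrderOf a = addOrderOf b := by
  classical
  by_contra hne
  have hab : (addOrderOf a : ZMod (addOrderOf b)) ≠ 0 := by
    rw [Ne, ZMod.natCast_eq_zero_iff, Nat.prime_dvd_prime_iff_eq hb ha]
    exact Ne.symm hne
  have ha₀ : a ≠ 0 := AddMonoid.addOrderOf_eq_one_iff.not.mp ha.ne_one
  have htop := fdeg_pi_single_zero_eq_top ha₀ hb hab
  exact hfin.ne (top_unique (htop ▸ le_iSup fdeg _))

end FunctionalDegree

theorem delta_finite_implies_p_groups {A B : Type*} [AddCommGroup A] [AddCommGroup B]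
    [Nontrivial A] [Nontrivial B]
    (hA : ∀ x : A, ∃ n : ℕ, 0 < n ∧ n • x = 0)
    (hB : ∀ y : B, ∃ n : ℕ, 0 < n ∧ n • y = 0)
    (hfin : (⨆ f : A → B, fdeg f) < ⊤) :
    ∃ p : ℕ, p.Prime ∧ (∀ x : A, ∃ n : ℕ, p ^ n • x = 0) ∧
      (∀ y : B, ∃ n : ℕ, p ^ n • y = 0) := by
  have torsionA : IsAddTorsion A := fun x => isOfFinAddOrder_iff_nsmul_eq_zero.mpr (hA x)
  have torsionB : IsAddTorsion B := fun y => isOfFinAddOrder_iff_nsmul_eq_zero.mpr (hB y)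
  have horder {a : A} {b : B} := addOrderOf_eq_of_iSup_fdeg_lt_top hfin (a := a) (b := b)
  obtain ⟨a₀, ha₀⟩ := exists_prime_addOrderOf torsionA
  obtain ⟨b₀, hb₀⟩ := exists_prime_addOrderOf torsionB
  refine ⟨addOrderOf a₀, ha₀, fun x => ?_, fun y => ?_⟩
  · exact exists_prime_pow_nsmul_eq_zero (torsionA x) fun a ha =>
      (horder ha hb₀).trans (horder ha₀ hb₀).symm
  · exact exists_prime_pow_nsmul_eq_zero (torsionB y) fun b hb => (horder ha₀ hb).symm
end

section
/- Let A be an abelian group, B an abelian group of finite exponent n ≥ 2, and δ(A,B) := sup{fdeg(f) : f : A → B}. Then δ(A,B) + 1 equals the least m with (Aug(ℤ_n[A]))^m = 0 (the nilpotency degree ν(ℤ_n[A]) of the augmentation ideal of the group ring ℤ/n[A]), with the convention ∞ + 1 = ∞. -/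
/-
`r ∈ ℤ[A]` acts on `A → B` by `Σ r_a f(· + a)`, and since `n • B = 0` this action only
sees the coefficients of `r` modulo `n`. Conversely, applied to the function supported at one point
with value an element of order `n`, it reads off one coefficient of `r` modulo `n`. Hence `I^m`
kills every `f : A → B` exactly when the image of `I^m` in `ℤ/n[A]`, which is the `m`-th power
of the augmentation ideal there, vanishes; so `δ(A,B) ≤ k ↔ ν(ℤ/n[A]) ≤ k + 1`.
-/

open scoped BigOperators

open AddMonoidAlgebra

theorem ENat.eq_sInf_of_forall_le_natCast_iff {x : ℕ∞} {P : ℕ → Prop}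
    (h : ∀ m : ℕ, x ≤ m ↔ P m) :
    x = sInf {M : ℕ∞ | ∃ m : ℕ, M = m ∧ P m} := by
  refine le_antisymm (le_sInf ?_) ?_
  · rintro _ ⟨m, rfl, hm⟩
    exact (h m).2 hm
  · induction x using ENat.recTopCoe with
    | top => exact le_top
    | coe k => exact sInf_le ⟨k, rfl, (h k).1 le_rfl⟩

theorem map_augIdealR {R S A : Type*} [CommRing R] [CommRing S] [AddCommGroup A] (f : R →+* S) :
    (augIdealR R A).map (mapRingHom A f) = augIdealR S A := by
  simp only [augIdealR, Ideal.map_span]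
  congr 1
  ext s
  simp [eq_comm]

section

variable {A B : Type*} [AddCommGroup A] [AddCommGroup B]

theorem groupRingAct_piSingle [DecidableEq A] (r : AddMonoidAlgebra ℤ A) (a₀ : A) (b : B)
    (x : A) :
    groupRingAct r (Pi.single a₀ b) x = r.coeff (a₀ - x) • b := by
  simp only [groupRingAct, Pi.single_apply, ← eq_sub_iff_add_eq', smul_ite, smul_zero,
    Finsupp.sum_ite_eq']
  split_ifs with h
  · rfl
  · rw [Finsupp.notMem_support_iff.1 h, zero_smul]

theorem groupRingAct_eq_zero_of_mapRingHom_eq_zero (n : ℕ) (hB : AddMonoid.exponent B ∣ n)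
    {r : AddMonoidAlgebra ℤ A} (hr : mapRingHom A (Int.castRingHom (ZMod n)) r = 0)
    (f : A → B) :
    groupRingAct r f = 0 := by
  funext x
  refine Finset.sum_eq_zero fun a _ => ?_
  obtain ⟨c, hc⟩ := (ZMod.intCast_zmod_eq_zero_iff_dvd _ n).1 <| by
    simpa using congr_arg (·.coeff a) hr
  obtain ⟨d, rfl⟩ := hB
  dsimp only
  rw [hc, mul_smul, natCast_zsmul, mul_nsmul', AddMonoid.exponent_nsmul_eq_zero]

theorem forall_groupRingAct_eq_zero_iff (n : ℕ) (hn : n ≠ 0) (hexp : AddMonoid.exponent B = n)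
    (r : AddMonoidAlgebra ℤ A) :
    (∀ f : A → B, groupRingAct r f = 0) ↔ mapRingHom A (Int.castRingHom (ZMod n)) r = 0 := by
  classical
  refine ⟨fun h => ?_, fun h => groupRingAct_eq_zero_of_mapRingHom_eq_zero n hexp.dvd h⟩
  obtain ⟨b, hb⟩ :=
    AddMonoid.exists_addOrderOf_eq_exponent (AddMonoid.exponent_ne_zero.1 (hexp ▸ hn))
  ext a
  have := congr_fun (h (Pi.single a b)) 0
  rw [groupRingAct_piSingle, sub_zero, Pi.zero_apply, ← addOrderOf_dvd_iff_zsmul_eq_zero, hb,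
    hexp] at this
  simpa [ZMod.intCast_zmod_eq_zero_iff_dvd] using this

theorem fdeg_le_iff (f : A → B) (k : ℕ) :
    fdeg f ≤ k ↔ ∀ r ∈ augIdeal A ^ (k + 1), groupRingAct r f = 0 := by
  refine ⟨fun h => ?_, fun h => sInf_le ⟨k, rfl, h⟩⟩
  obtain ⟨_, ⟨j, rfl, hj⟩, hjk⟩ := sInf_lt_iff.1 (ENat.lt_natCast_add_one_iff.2 h)
  have hjk : j ≤ k := by exact_mod_cast ENat.lt_natCast_add_one_iff.1 hjk
  exact fun r hr => hj r (Ideal.pow_le_pow_right (by omega) hr)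

end

theorem delta_add_one_eq_nu {A B : Type*} [AddCommGroup A] [AddCommGroup B]
    (n : ℕ) (hn : 2 ≤ n) (hexp : AddMonoid.exponent B = n) :
    (⨆ f : A → B, fdeg f) + 1 =
      sInf {M : ℕ∞ | ∃ m : ℕ, M = (m : ℕ∞) ∧ (augIdealR (ZMod n) A) ^ m = ⊥} := by
  -- `ℤ/n[A]` is nontrivial, so `I^0 = ⊤ ≠ ⊥` there: this settles `m = 0`.
  have : Fact (1 < n) := ⟨hn⟩
  refine ENat.eq_sInf_of_forall_le_natCast_iff fun m => ?_
  cases m with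
  | zero => simp
  | succ k =>
    rw [Nat.cast_succ, ENat.add_le_add_iff_right ENat.one_ne_top, iSup_le_iff,
      ← map_augIdealR (Int.castRingHom (ZMod n)), ← Ideal.map_pow, Ideal.map_eq_bot_iff_le_ker]
    simp only [fdeg_le_iff, SetLike.le_def, RingHom.mem_ker,
      ← forall_groupRingAct_eq_zero_iff n (by omega) hexp]
    exact ⟨fun h r hr f => h f r hr, fun h f r hr => h hr f⟩
end

section
/- Let p be a prime, α_1, …, α_k ∈ ℕ, A = ∏_{i=1}^k ℤ/p^{α_i}, a ∈ A, and let χ_a : A → ℤ/p be the characteristic function of a (χ_a(a) = 1 and χ_a(x) = 0 for x ≠ a). Then fdeg(χ_a) = ∑_{i=1}^k (p^{α_i} − 1). -/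
open scoped BigOperators

/-!
Reduce ℤ[A] modulo p: the action on `ZMod p`-valued functions factors through `𝔽_p[A]`, whose
augmentation ideal is generated by the elements `s_i = e_i - 1` for the standard generators
`e_i` of `A`. By Frobenius `s_i ^ p^(α i) = e_i ^ p^(α i) - 1 = 0`, and an ideal generated by
elements with `s_i ^ (n_i + 1) = 0` has vanishing `(∑ n_i + 1)`-st power (binomial expansion).
Conversely `s_i ^ (p^(α i) - 1) = 1 + e_i + ⋯ + e_i ^ (p^(α i) - 1)` in characteristic `p`, so
`∏ s_i ^ (p^(α i) - 1)` is the norm element `∑_{b ∈ A} b`, which sends `χ_a` to the constant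
function `1`.
-/

open Finset AddMonoidAlgebra

namespace Ideal

variable {R : Type*} [CommSemiring R]

lemma sup_pow_add_add_one_le (I J : Ideal R) (n m : ℕ) :
    (I ⊔ J) ^ (n + m + 1) ≤ I ^ (n + 1) ⊔ J ^ (m + 1) := by
  rw [← add_eq_sup, ← add_eq_sup, add_pow, sum_eq_sup]
  refine Finset.sup_le fun i hi => mul_le_left.trans ?_
  rcases le_or_gt (n + 1) i with hn | hn
  · exact le_sup_of_le_left (mul_le_left.trans (pow_le_pow_right hn))
  · have hi' := mem_range.mp hi
    exact le_sup_of_le_right (mul_le_right.trans (pow_le_pow_right (by omega)))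

lemma span_range_pow_eq_bot {ι : Type*} [Fintype ι] (x : ι → R) (n : ι → ℕ)
    (hx : ∀ i, x i ^ (n i + 1) = 0) : span (Set.range x) ^ (∑ i, n i + 1) = ⊥ := by
  classical
  suffices ∀ s : Finset ι, span (x '' s) ^ (∑ i ∈ s, n i + 1) = ⊥ by
    simpa [Set.image_univ] using this univ
  intro s
  induction s using Finset.induction_on with
  | empty => simp
  | insert j s hj ih =>
    rw [coe_insert, Set.image_insert_eq, span_insert, sum_insert hj, eq_bot_iff]
    calc _ ≤ span {x j} ^ (n j + 1) ⊔ span (x '' s) ^ (∑ i ∈ s, n i + 1) :=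
          sup_pow_add_add_one_le _ _ _ _
      _ = ⊥ := by rw [ih, span_singleton_pow, hx, span_singleton_eq_bot.mpr rfl, sup_bot_eq]

end Ideal

section Frobenius

open Polynomial

variable (p : ℕ) [Fact p.Prime] (m : ℕ)

lemma X_sub_one_pow_prime_pow : (X - 1 : (ZMod p)[X]) ^ p ^ m = X ^ p ^ m - 1 := by
  rw [sub_pow_char_pow, one_pow]

lemma X_sub_one_pow_prime_pow_sub_one :
    (X - 1 : (ZMod p)[X]) ^ (p ^ m - 1) = ∑ j ∈ range (p ^ m), X ^ j := by
  apply mul_right_cancel₀ (X_sub_C_ne_zero (1 : ZMod p))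
  rw [C_1, geom_sum_mul, ← pow_succ,
    Nat.sub_add_cancel (Nat.one_le_pow _ _ (Fact.out : p.Prime).pos), X_sub_one_pow_prime_pow]

variable {p m} {S : Type*} [Ring S] [Algebra (ZMod p) S]

lemma sub_one_pow_prime_pow_eq_zero {x : S} (hx : x ^ p ^ m = 1) : (x - 1) ^ p ^ m = 0 := by
  simpa [hx] using congr_arg (aeval x) (X_sub_one_pow_prime_pow p m)

lemma sub_one_pow_prime_pow_sub_one (x : S) :
    (x - 1) ^ (p ^ m - 1) = ∑ j ∈ range (p ^ m), x ^ j := by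
  simpa using congr_arg (aeval x) (X_sub_one_pow_prime_pow_sub_one p m)

end Frobenius

section GroupRing

variable {R A : Type*} [CommRing R] [AddCommGroup A]

lemma single_sub_one_mem_augIdealR_s16 (a : A) : single a (1 : R) - 1 ∈ augIdealR R A :=
  Ideal.subset_span ⟨a, rfl⟩

lemma augIdealR_eq_span_of_closure_eq_top_s16 {ι : Type*} {e : ι → A}
    (he : AddSubgroup.closure (Set.range e) = ⊤) :
    augIdealR R A = Ideal.span (Set.range fun i => single (e i) (1 : R) - 1) := by
  refine le_antisymm (Ideal.span_le.mpr ?_) (Ideal.span_le.mpr ?_)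
  · rintro _ ⟨a, rfl⟩
    have ha : a ∈ AddSubgroup.closure (Set.range e) := he ▸ AddSubgroup.mem_top a
    induction ha using AddSubgroup.closure_induction with
    | mem _ h => obtain ⟨i, rfl⟩ := h; exact Ideal.subset_span ⟨i, rfl⟩
    | zero => simp [← one_def]
    | add a b _ _ ha hb =>
      have : single (a + b) (1 : R) - 1 = (single a 1 - 1) * single b 1 + (single b 1 - 1) := by
        rw [sub_mul, single_mul_single, one_mul, one_mul]; ring
      rw [SetLike.mem_coe, this]
      exact add_mem (Ideal.mul_mem_right _ _ ha) hb
    | neg a _ ha =>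
      have : single (-a) (1 : R) - 1 = -((single a 1 - 1) * single (-a) 1) := by
        rw [sub_mul, single_mul_single, one_mul, one_mul, add_neg_cancel, ← one_def]; ring
      rw [SetLike.mem_coe, this]
      exact neg_mem (Ideal.mul_mem_right _ _ ha)
  · rintro _ ⟨i, rfl⟩
    exact single_sub_one_mem_augIdealR_s16 (e i)

end GroupRing

section Action

variable {A B : Type*} [AddCommGroup A] [AddCommGroup B] {n : ℕ} [Module (ZMod n) B]

lemma groupRingAct_eq_sum_map (r : AddMonoidAlgebra ℤ A) (f : A → B) (x : A) :
    groupRingAct r f x =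
      (mapRingHom A (Int.castRingHom (ZMod n)) r).coeff.sum fun a c => c • f (x + a) := by
  rw [coe_mapRingHom, coeff_map, Finsupp.sum_mapRange_index fun a => zero_smul _ (f (x + a))]
  simp [groupRingAct, Int.cast_smul_eq_zsmul]

lemma groupRingAct_eq_zero_of_map_eq_zero {r : AddMonoidAlgebra ℤ A}
    (hr : mapRingHom A (Int.castRingHom (ZMod n)) r = 0) (f : A → B) : groupRingAct r f = 0 := by
  funext x
  rw [groupRingAct_eq_sum_map (n := n), hr]
  rfl

lemma groupRingAct_eq_sum_of_map_eq_sum_single [Fintype A] {r : AddMonoidAlgebra ℤ A}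
    (hr : mapRingHom A (Int.castRingHom (ZMod n)) r = ∑ b, single b 1) (f : A → B) (x : A) :
    groupRingAct r f x = ∑ b, f b := by
  rw [groupRingAct_eq_sum_map (n := n), hr, coeff_sum,
    ← Finsupp.sum_finsetSum_index (fun a => zero_smul _ (f (x + a))) fun _ _ _ => add_smul _ _ _]
  refine Fintype.sum_equiv (Equiv.addLeft x) _ _ fun b => ?_
  rw [coeff_single, Finsupp.sum_single_index (zero_smul _ (f (x + b))), one_smul,
    Equiv.coe_addLeft]

end Action

lemma fdeg_eq_of_forall_of_ne {A B : Type*} [AddCommGroup A] [AddCommGroup B] {f : A → B}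
    {N : ℕ} (hvan : ∀ r ∈ augIdeal A ^ (N + 1), groupRingAct r f = 0)
    {r₀ : AddMonoidAlgebra ℤ A} (hr₀ : r₀ ∈ augIdeal A ^ N) (hne : groupRingAct r₀ f ≠ 0) :
    fdeg f = N := by
  refine le_antisymm (sInf_le ⟨N, rfl, hvan⟩) (le_sInf ?_)
  rintro _ ⟨m, rfl, hm⟩
  by_contra! h
  exact hne (hm r₀ (Ideal.pow_le_pow_right (by exact_mod_cast h) hr₀))

lemma ZMod.sum_range_natCast {M : Type*} [AddCommMonoid M] (n : ℕ) [NeZero n] (g : ZMod n → M) :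
    ∑ j ∈ range n, g j = ∑ z, g z :=
  sum_nbij' (↑) ZMod.val (fun _ _ => mem_univ _) (fun z _ => mem_range.mpr z.val_lt)
    (fun _ hj => ZMod.val_natCast_of_lt (mem_range.mp hj)) (fun z _ => ZMod.natCast_zmod_val z)
    fun _ _ => rfl

section PiZMod

variable {ι : Type*} [DecidableEq ι]

lemma single_piSingle_one_pow {R : Type*} [Semiring R] (n : ι → ℕ) (i : ι) :
    single (Pi.single i 1 : ∀ i, ZMod (n i)) (1 : R) ^ n i = 1 := by
  rw [single_pow, one_pow, ← Pi.single_nsmul, nsmul_one, ZMod.natCast_self, Pi.single_zero,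
    one_def]

variable {p : ℕ} [Fact p.Prime] (α : ι → ℕ)

lemma single_piSingle_one_sub_one_pow_eq_zero (i : ι) :
    (single (Pi.single i 1 : ∀ i, ZMod (p ^ α i)) (1 : ZMod p) - 1) ^ p ^ α i = 0 :=
  sub_one_pow_prime_pow_eq_zero (single_piSingle_one_pow _ i)

variable [Fintype ι]

lemma closure_range_piSingle_one (n : ι → ℕ) :
    AddSubgroup.closure (Set.range fun i => (Pi.single i 1 : ∀ i, ZMod (n i))) = ⊤ := by
  refine eq_top_iff.mpr fun b _ => ?_
  rw [← univ_sum_single b]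
  refine sum_mem fun i _ => ?_
  obtain ⟨m, hm⟩ := ZMod.intCast_surjective (b i)
  rw [← hm, ← zsmul_one, Pi.single_zsmul]
  exact zsmul_mem (AddSubgroup.subset_closure (Set.mem_range_self i)) m

lemma prod_sum_single_piSingle {R : Type*} [CommSemiring R] {G : ι → Type*}
    [∀ i, AddCommMonoid (G i)] [∀ i, Fintype (G i)] :
    ∏ i, ∑ z : G i, single (Pi.single i z) (1 : R) = ∑ b : ∀ i, G i, single b 1 := by
  rw [prod_univ_sum, Fintype.piFinset_univ]
  refine sum_congr rfl fun b _ => ?_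
  rw [prod_single, univ_sum_single, prod_const_one]

lemma prod_single_piSingle_one_sub_one_pow :
    ∏ i, (single (Pi.single i 1 : ∀ i, ZMod (p ^ α i)) (1 : ZMod p) - 1) ^ (p ^ α i - 1) =
      ∑ b, single b 1 := by
  calc _ = ∏ i, ∑ z : ZMod (p ^ α i),
        single (Pi.single i z : ∀ i, ZMod (p ^ α i)) (1 : ZMod p) := by
        refine prod_congr rfl fun i _ => ?_
        rw [sub_one_pow_prime_pow_sub_one, ← ZMod.sum_range_natCast]
        refine sum_congr rfl fun j _ => ?_
        rw [single_pow, one_pow, ← Pi.single_nsmul, nsmul_one]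
    _ = ∑ b, single b 1 := prod_sum_single_piSingle

lemma augIdeal_pi_eq_span (n : ι → ℕ) :
    augIdeal (∀ i, ZMod (n i)) = Ideal.span (Set.range fun i => single (Pi.single i 1) 1 - 1) :=
  augIdealR_eq_span_of_closure_eq_top_s16 (closure_range_piSingle_one n)

lemma map_augIdeal_pi_pow_eq_bot :
    (augIdeal (∀ i, ZMod (p ^ α i))).map (mapRingHom _ (Int.castRingHom (ZMod p))) ^
      (∑ i, (p ^ α i - 1) + 1) = ⊥ := by
  rw [augIdeal_pi_eq_span, Ideal.map_span, ← Set.range_comp]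
  refine Ideal.span_range_pow_eq_bot _ _ fun i => ?_
  rw [Nat.sub_add_cancel NeZero.one_le]
  simpa using single_piSingle_one_sub_one_pow_eq_zero α i

end PiZMod

theorem fdeg_char_fun_general {p : ℕ} (hp : p.Prime) {k : ℕ} (α : Fin k → ℕ)
    (a : ∀ i : Fin k, ZMod (p ^ α i)) :
    fdeg (fun x : ∀ i : Fin k, ZMod (p ^ α i) => if x = a then (1 : ZMod p) else 0) =
      ((∑ i : Fin k, (p ^ α i - 1) : ℕ) : ℕ∞) := by
  have : Fact p.Prime := ⟨hp⟩
  set π := mapRingHom (∀ i, ZMod (p ^ α i)) (Int.castRingHom (ZMod p))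
  set g := fun i => single (Pi.single i 1 : ∀ i, ZMod (p ^ α i)) (1 : ℤ) - 1
  refine fdeg_eq_of_forall_of_ne (r₀ := ∏ i, g i ^ (p ^ α i - 1))
    (fun r hr => groupRingAct_eq_zero_of_map_eq_zero (n := p) ?_ _) ?_ fun h => ?_
  · have hπr := Ideal.mem_map_of_mem π hr
    rwa [Ideal.map_pow, map_augIdeal_pi_pow_eq_bot, Ideal.mem_bot] at hπr
  · rw [← prod_pow_eq_pow_sum]
    exact Ideal.prod_mem_prod fun i _ =>
      Ideal.pow_mem_pow (single_sub_one_mem_augIdealR_s16 _) _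
  · have hnorm : π (∏ i, g i ^ (p ^ α i - 1)) = ∑ b, single b (1 : ZMod p) := by
      simpa [π, g] using prod_single_piSingle_one_sub_one_pow α
    have h0 := congr_fun h 0
    rw [groupRingAct_eq_sum_of_map_eq_sum_single hnorm] at h0
    simp at h0

theorem fdeg_char_fun {p : ℕ} (hp : p.Prime) {k : ℕ} (α : Fin k → ℕ)
    (hα : ∀ i, 0 < α i) (a : ∀ i : Fin k, ZMod (p ^ α i)) :
    fdeg (fun x : ∀ i : Fin k, ZMod (p ^ α i) => if x = a then (1 : ZMod p) else 0) =
      ((∑ i : Fin k, (p ^ α i - 1) : ℕ) : ℕ∞) :=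
  fdeg_char_fun_general hp α a
end

section
/- Let F be a finite field of characteristic p with q elements, and for n ∈ ℕ₀ let f_n : F → F, f_n(x) = x^n. Then fdeg(f_n) ≤ s_p(n), where s_p(n) is the digit sum of n in base p; and if n < q, then fdeg(f_n) = s_p(n). -/
open scoped BigOperators

/-!
Write `Δ_[a] f = f (· + a) - f`. The augmentation ideal `I` is generated by the elements
`τ_a - 1`, which act as `Δ_[a]`, so `I ^ (m + 1)` kills `f` iff `I ^ m` kills every `Δ_[a] f`.

Upper bound: `Δ_[a] (x ^ k) = ∑_{j < k} C(k, j) a ^ (k - j) x ^ j`, and by Kummer's theorem the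
binomial coefficients that survive in characteristic `p` have `s_p(j) < s_p(k)`. Hence every
difference lowers the digit sum of the exponents, and `s_p(n) + 1` of them kill `x ^ n`.

Lower bound: removing the lowest nonzero base-`p` digit `p ^ e` of `m` causes no carry, so
`p ∤ C(m, p ^ e)`. Therefore the coefficient of `X ^ (m - p ^ e)` in `P (X + a) - P X`, a
polynomial in `a` of degree `< |R|`, does not vanish for some `a`, while the digit sum drops by
exactly one. After `s_p(n)` such differences of `X ^ n` a nonzero polynomial of degree `< |R|` is
left, and it is a nonzero function.
-/

namespace Nat

variable {p : ℕ}

theorem sum_digits_base_pow_mul (hp : 1 < p) (k m : ℕ) :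
    (p.digits (p ^ k * m)).sum = (p.digits m).sum := by
  rcases m.eq_zero_or_pos with rfl | hm
  · simp
  · simp [digits_base_pow_mul hp hm]

theorem sum_digits_base_pow (hp : 1 < p) (k : ℕ) : (p.digits (p ^ k)).sum = 1 := by
  simpa [digits_of_lt p 1 one_ne_zero hp] using sum_digits_base_pow_mul hp k 1

theorem sum_digits_sub_one_add_one (hp : 1 < p) {m : ℕ} (hm : ¬p ∣ m) :
    (p.digits (m - 1)).sum + 1 = (p.digits m).sum := by
  obtain ⟨d, w, hd0, hdp, rfl⟩ : ∃ d w, d ≠ 0 ∧ d < p ∧ m = d + p * w :=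
    ⟨m % p, m / p, fun h => hm (dvd_of_mod_eq_zero h), mod_lt m (by omega),
      (mod_add_div m p).symm⟩
  rcases eq_or_ne (d - 1 + p * w) 0 with h | h
  · obtain ⟨rfl, rfl⟩ : d = 1 ∧ w = 0 := by simp at h; omega
    simp [digits_of_lt p 1 one_ne_zero hp]
  · have hxy : d - 1 ≠ 0 ∨ w ≠ 0 := by
      contrapose! h
      simp [h.1, h.2]
    rw [show d + p * w - 1 = d - 1 + p * w by omega, digits_add p hp (d - 1) w (by omega) hxy,
      digits_add p hp d w hdp (Or.inl hd0)]
    simp only [List.sum_cons]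
    omega

theorem exists_sum_digits_sub_pow_add_one (hp : 1 < p) {m : ℕ} (hm : m ≠ 0) :
    ∃ e, p ^ e ≤ m ∧ (p.digits (m - p ^ e)).sum + 1 = (p.digits m).sum := by
  obtain ⟨e, u, hu, rfl⟩ := exists_eq_pow_mul_and_not_dvd hm p hp.ne'
  refine ⟨e, Nat.le_mul_of_pos_right _ (pos_of_ne_zero (by rintro rfl; simp at hu)), ?_⟩
  rw [← Nat.mul_sub_one, sum_digits_base_pow_mul hp, sum_digits_base_pow_mul hp,
    sum_digits_sub_one_add_one hp hu]

theorem sum_digits_pos (hp : 1 < p) {m : ℕ} (hm : m ≠ 0) : 0 < (p.digits m).sum := by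
  obtain ⟨e, -, he⟩ := exists_sum_digits_sub_pow_add_one hp hm
  omega

theorem sum_digits_lt_of_not_dvd_choose (hp : p.Prime) {j k : ℕ} (hjk : j < k)
    (h : ¬p ∣ k.choose j) : (p.digits j).sum < (p.digits k).sum := by
  have := Fact.mk hp
  have kummer := sub_one_mul_padicValNat_choose_eq_sub_sum_digits (p := p) hjk.le
  rw [padicValNat.eq_zero_of_not_dvd h, mul_zero] at kummer
  have := sum_digits_pos hp.one_lt (Nat.sub_ne_zero_of_lt hjk)
  omega

theorem not_dvd_choose_of_sum_digits_add (hp : p.Prime) {j k : ℕ} (hjk : j ≤ k)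
    (h : (p.digits j).sum + (p.digits (k - j)).sum = (p.digits k).sum) : ¬p ∣ k.choose j := by
  have := Fact.mk hp
  have kummer := sub_one_mul_padicValNat_choose_eq_sub_sum_digits (p := p) hjk
  rw [h, Nat.sub_self, Nat.mul_eq_zero, Nat.sub_eq_zero_iff_le] at kummer
  rw [dvd_iff_padicValNat_ne_zero (choose_pos hjk).ne', not_not]
  exact kummer.resolve_left hp.one_lt.not_ge

end Nat

open fwdDiff Polynomial Cardinal

namespace FunctionalDegree

section Action

variable {A B : Type*} [AddCommGroup A] [AddCommGroup B]

variable (A B) in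
noncomputable def translation : Multiplicative A →* Module.End ℤ (A → B) where
  toFun a := LinearMap.funLeft ℤ B (· + a.toAdd)
  map_one' := by ext f x; simp
  map_mul' a b := by ext f x; simp [add_assoc]

theorem groupRingAct_eq_lift (r : AddMonoidAlgebra ℤ A) (f : A → B) :
    groupRingAct r f =
      AddMonoidAlgebra.lift ℤ (Module.End ℤ (A → B)) A (translation A B) r f := by
  ext x
  simp [groupRingAct, AddMonoidAlgebra.lift_apply, Finsupp.sum, translation]

theorem groupRingAct_mul (r s : AddMonoidAlgebra ℤ A) (f : A → B) :
    groupRingAct (r * s) f = groupRingAct r (groupRingAct s f) := by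
  simp only [groupRingAct_eq_lift, map_mul, Module.End.mul_apply]

theorem groupRingAct_single_sub_one (a : A) (f : A → B) :
    groupRingAct (AddMonoidAlgebra.single a 1 - 1) f = Δ_[a] f := by
  ext x
  simp [groupRingAct_eq_lift, translation, fwdDiff]

variable (f : A → B)

noncomputable def annihilator : Ideal (AddMonoidAlgebra ℤ A) where
  carrier := {r | groupRingAct r f = 0}
  zero_mem' := by simp [groupRingAct_eq_lift]
  add_mem' := by intro r s hr hs; simp_all [groupRingAct_eq_lift]
  smul_mem' c r hr := by simp_all [groupRingAct_eq_lift]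

theorem mem_annihilator {r : AddMonoidAlgebra ℤ A} :
    r ∈ annihilator f ↔ groupRingAct r f = 0 :=
  Iff.rfl

theorem pow_zero_le_annihilator_iff : augIdeal A ^ 0 ≤ annihilator f ↔ f = 0 := by
  simp [Ideal.one_eq_top, top_le_iff, Ideal.eq_top_iff_one, mem_annihilator, groupRingAct_eq_lift]

theorem augIdeal_le_iff {J : Ideal (AddMonoidAlgebra ℤ A)} :
    augIdeal A ≤ J ↔ ∀ a : A, AddMonoidAlgebra.single a 1 - 1 ∈ J := by
  simp [augIdeal, augIdealR, Ideal.span_le, Set.subset_def]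

theorem pow_succ_le_annihilator_iff (m : ℕ) :
    augIdeal A ^ (m + 1) ≤ annihilator f ↔
      ∀ a : A, augIdeal A ^ m ≤ annihilator (Δ_[a] f) := by
  have mul_le_iff_le_colon {I J K : Ideal (AddMonoidAlgebra ℤ A)} :
      I * J ≤ K ↔ I ≤ K.colon (J : Set (AddMonoidAlgebra ℤ A)) := by
    rw [Submodule.mul_le]
    simp [SetLike.le_def, Submodule.mem_colon]
  rw [pow_succ', mul_le_iff_le_colon, augIdeal_le_iff]
  refine forall_congr' fun a => ?_
  simp only [Submodule.mem_colon, smul_eq_mul, mul_comm (AddMonoidAlgebra.single a (1 : ℤ) - 1),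
    mem_annihilator, groupRingAct_mul, groupRingAct_single_sub_one, SetLike.le_def, SetLike.mem_coe]

theorem fdeg_le_of_pow_le_annihilator {m : ℕ} (h : augIdeal A ^ (m + 1) ≤ annihilator f) :
    fdeg f ≤ m :=
  sInf_le ⟨m, rfl, fun _ hr => h hr⟩

theorem le_fdeg_of_not_pow_le_annihilator {s : ℕ} (h : ¬augIdeal A ^ s ≤ annihilator f) :
    (s : ℕ∞) ≤ fdeg f := by
  refine le_sInf ?_
  rintro _ ⟨n, rfl, hn⟩
  by_contra! hlt
  exact h ((Ideal.pow_le_pow_right (by exact_mod_cast hlt)).trans fun _ hr => hn _ hr)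

end Action

section UpperBound

variable (p : ℕ) (R : Type*) [CommRing R]

-- The strict bound makes `digitSumLtSpan p R 0 = ⊥`, which starts the induction below.
def digitSumLtSpan (m : ℕ) : Submodule R (R → R) :=
  Submodule.span R {f | ∃ k, (p.digits k).sum < m ∧ f = fun x => x ^ k}

variable {p R}

theorem fwdDiff_pow_eq_sum (a : R) (k : ℕ) :
    Δ_[a] (fun x : R => x ^ k) =
      ∑ j ∈ Finset.range k, ((k.choose j : R) * a ^ (k - j)) • fun x : R => x ^ j := by
  ext x
  rw [fwdDiff, add_pow, Finset.sum_range_succ, Finset.sum_apply]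
  simp only [Nat.choose_self, Nat.sub_self, pow_zero, Nat.cast_one, mul_one, add_sub_cancel_right,
    Pi.smul_apply, smul_eq_mul]
  exact Finset.sum_congr rfl fun j _ => by ring

theorem fwdDiff_mem_digitSumLtSpan (hp : p.Prime) [CharP R p] (a : R) {m : ℕ} {f : R → R}
    (hf : f ∈ digitSumLtSpan p R (m + 1)) : Δ_[a] f ∈ digitSumLtSpan p R m := by
  induction hf using Submodule.span_induction with
  | mem f hf =>
    obtain ⟨k, hk, rfl⟩ := hf
    rw [fwdDiff_pow_eq_sum]
    refine Submodule.sum_mem _ fun j hj => ?_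
    by_cases hchoose : p ∣ k.choose j
    · simp [(CharP.cast_eq_zero_iff R p _).2 hchoose]
    · have := Nat.sum_digits_lt_of_not_dvd_choose hp (Finset.mem_range.1 hj) hchoose
      exact Submodule.smul_mem _ _ (Submodule.subset_span ⟨j, by omega, rfl⟩)
  | zero =>
    convert (digitSumLtSpan p R m).zero_mem
    ext x
    simp [fwdDiff]
  | add f g _ _ hf hg => simpa using Submodule.add_mem _ hf hg
  | smul c f _ hf => simpa using Submodule.smul_mem _ c hf

theorem pow_le_annihilator_of_mem_digitSumLtSpan (hp : p.Prime) [CharP R p] {m : ℕ} {f : R → R}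
    (hf : f ∈ digitSumLtSpan p R m) : augIdeal R ^ m ≤ annihilator f := by
  induction m generalizing f with
  | zero =>
    rw [pow_zero_le_annihilator_iff]
    simpa [digitSumLtSpan] using hf
  | succ m ih =>
    exact (pow_succ_le_annihilator_iff f m).2 fun a => ih (fwdDiff_mem_digitSumLtSpan hp a hf)

theorem fdeg_pow_le (hp : p.Prime) [CharP R p] (n : ℕ) :
    fdeg (fun x : R => x ^ n) ≤ ((p.digits n).sum : ℕ∞) :=
  fdeg_le_of_pow_le_annihilator _ <|
    pow_le_annihilator_of_mem_digitSumLtSpan hp (Submodule.subset_span ⟨n, by omega, rfl⟩)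

end UpperBound

section LowerBound

variable {p : ℕ} {R : Type*} [CommRing R]

theorem fwdDiff_eval (a : R) (P : R[X]) :
    Δ_[a] (fun x => P.eval x) = fun x => (taylor a P - P).eval x := by
  ext x
  simp [fwdDiff, taylor_eval]

variable [IsDomain R]

theorem exists_eval_ne_zero_of_natDegree_lt_card {P : R[X]} (hP : P ≠ 0)
    (hdeg : (P.natDegree : Cardinal) < #R) : ∃ x, P.eval x ≠ 0 := by
  by_contra! h
  exact hP (eq_zero_of_forall_eval_zero_of_natDegree_lt_card P h hdeg)

theorem exists_coeff_taylor_sub_self_ne_zero (hp : p.Prime) [CharP R p] {P : R[X]}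
    (hdeg : (P.natDegree : Cardinal) < #R) {m : ℕ} (hm : m ≠ 0) (hc : P.coeff m ≠ 0) :
    ∃ a m', (p.digits m').sum + 1 = (p.digits m).sum ∧ (taylor a P - P).coeff m' ≠ 0 := by
  obtain ⟨e, hle, he⟩ := Nat.exists_sum_digits_sub_pow_add_one hp.one_lt hm
  set m' := m - p ^ e
  have hchoose : ¬p ∣ m.choose m' :=
    Nat.not_dvd_choose_of_sum_digits_add hp (Nat.sub_le _ _) <| by
      rw [Nat.sub_sub_self hle, Nat.sum_digits_base_pow hp.one_lt]
      exact he
  set Q := hasseDeriv m' P - C (P.coeff m')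
  have hQ : Q.coeff (p ^ e) ≠ 0 := by
    rw [coeff_sub, coeff_C, if_neg (pow_ne_zero e hp.ne_zero), sub_zero, hasseDeriv_coeff,
      show p ^ e + m' = m by omega]
    exact mul_ne_zero (mt (CharP.cast_eq_zero_iff R p _).1 hchoose) hc
  have hQdeg : (Q.natDegree : Cardinal) < #R := by
    refine lt_of_le_of_lt (Nat.cast_le.2 ?_) hdeg
    refine (natDegree_sub_le _ _).trans (max_le ?_ (by simp))
    exact (natDegree_hasseDeriv_le _ _).trans (Nat.sub_le _ _)
  obtain ⟨a, ha⟩ := exists_eval_ne_zero_of_natDegree_lt_card (fun h => hQ (by simp [h])) hQdeg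
  exact ⟨a, m', he, by simpa [Q, taylor_coeff] using ha⟩

theorem not_pow_le_annihilator_eval (hp : p.Prime) [CharP R p] {P : R[X]}
    (hdeg : (P.natDegree : Cardinal) < #R) {m : ℕ} (hc : P.coeff m ≠ 0) :
    ¬augIdeal R ^ (p.digits m).sum ≤ annihilator (fun x => P.eval x) := by
  induction hs : (p.digits m).sum generalizing P m with
  | zero =>
    rw [pow_zero_le_annihilator_iff]
    obtain ⟨x, hx⟩ := exists_eval_ne_zero_of_natDegree_lt_card (fun h => hc (by simp [h])) hdeg
    exact fun h => hx (congrFun h x)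
  | succ s ih =>
    have hm : m ≠ 0 := by rintro rfl; simp at hs
    obtain ⟨a, m', hm', hc'⟩ := exists_coeff_taylor_sub_self_ne_zero hp hdeg hm hc
    have hdeg' : ((taylor a P - P).natDegree : Cardinal) < #R := by
      refine lt_of_le_of_lt (Nat.cast_le.2 ?_) hdeg
      exact (natDegree_sub_le _ _).trans (by simp [natDegree_taylor])
    rw [pow_succ_le_annihilator_iff, not_forall]
    exact ⟨a, by simpa [fwdDiff_eval] using ih hdeg' hc' (by omega)⟩

theorem le_fdeg_pow (hp : p.Prime) [CharP R p] {n : ℕ} (hn : (n : Cardinal) < #R) :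
    ((p.digits n).sum : ℕ∞) ≤ fdeg (fun x : R => x ^ n) := by
  have := not_pow_le_annihilator_eval hp (P := (X ^ n : R[X])) (by simpa using hn) (m := n)
    (by simp)
  simpa using le_fdeg_of_not_pow_le_annihilator _ this

end LowerBound

end FunctionalDegree

theorem fdeg_pow_fun {p : ℕ} (hp : p.Prime) {F : Type*} [Field F] [Fintype F]
    [CharP F p] (n : ℕ) :
    fdeg (fun x : F => x ^ n) ≤ ((Nat.digits p n).sum : ℕ∞) ∧
      (n < Fintype.card F → fdeg (fun x : F => x ^ n) = ((Nat.digits p n).sum : ℕ∞)) :=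
  ⟨FunctionalDegree.fdeg_pow_le hp n, fun hn => (FunctionalDegree.fdeg_pow_le hp n).antisymm
    (FunctionalDegree.le_fdeg_pow hp (by simpa using hn))⟩
end
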